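/- Let $S \subset \mathbb{R}$ be bounded of positive measure and suppose $\Lambda = \{\lambda_n\} \subset \mathbb{R}$ is such that $\{e^{2\pi i \lambda_n x}\}$ is a Riesz basis for $L^2(S)$. Then there exists $\mu > 0$ (depending on $S$ and $\Lambda$) such that any sequence $\Gamma = \{\gamma_n\}$ with $|\lambda_n - \gamma_n| < \mu$ for all $n$ also yields a Riesz basis $\{e^{2\pi i\gamma_n x}\}$ for $L^2(S)$. -/

import Mathlib

/-!
Write `e_λ(x) = e^{2πiλx}` and let `S ⊆ [-R, R]`. Expanding in powers of `γ - λ`,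
`∑ cₙ (e_{γₙ} - e_{λₙ}) = ∑_{k ≥ 1} (2πix)^k / k! · ∑ₙ cₙ (γₙ - λₙ)^k e_{λₙ}`,
and the upper Riesz bound of `λ` applied to each inner sum bounds the `L²(S)` norm of the left
side by `(e^{2πRμ} - 1) √K ‖c‖₂` when `|γₙ - λₙ| ≤ μ`. Once this is at most `‖c‖₂ / (2√K)`,
the triangle inequality transfers both Riesz bounds to `γ` (with constant `4K`), and every `f`
is approximated by `γ`-combinations to within `‖f‖ / 2`, which forces `dist(f, span γ) = 0`.
-/

open MeasureTheory Real

noncomputable def expFun (l x : ℝ) : ℂ := Complex.exp (2 * π * Complex.I * l * x)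

def IsRieszBasisExpSeq (S : Set ℝ) (lam : ℕ → ℝ) : Prop :=
  (∀ f : ℝ → ℂ, MemLp f 2 (volume.restrict S) →
      ∀ ε > 0, ∃ (F : Finset ℕ) (c : ℕ → ℂ),
        ∫ x in S, ‖f x - ∑ n ∈ F, c n * expFun (lam n) x‖ ^ 2 < ε) ∧
  ∃ K ≥ (1 : ℝ), ∀ (F : Finset ℕ) (c : ℕ → ℂ),
    (1 / K) * ∑ n ∈ F, ‖c n‖ ^ 2 ≤ ∫ x in S, ‖∑ n ∈ F, c n * expFun (lam n) x‖ ^ 2 ∧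
    ∫ x in S, ‖∑ n ∈ F, c n * expFun (lam n) x‖ ^ 2 ≤ K * ∑ n ∈ F, ‖c n‖ ^ 2

section RieszBasis

variable {𝕜 E : Type*} [NormedField 𝕜] [NormedAddCommGroup E] [NormedSpace 𝕜 E]

theorem dense_span_range_iff {u : ℕ → E} :
    Dense (Submodule.span 𝕜 (Set.range u) : Set E) ↔
      ∀ f : E, ∀ ε > 0, ∃ (F : Finset ℕ) (c : ℕ → 𝕜), ‖f - ∑ n ∈ F, c n • u n‖ < ε := by
  simp only [Dense, Metric.mem_closure_iff, SetLike.mem_coe, dist_eq_norm]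
  constructor
  · intro h f ε hε
    obtain ⟨_, hw, hfw⟩ := h f ε hε
    obtain ⟨c, rfl⟩ := Finsupp.mem_span_range_iff_exists_finsupp.1 hw
    exact ⟨c.support, c, hfw⟩
  · intro h f ε hε
    obtain ⟨F, c, hc⟩ := h f ε hε
    exact ⟨_, Submodule.sum_mem _ fun n _ => Submodule.smul_mem _ _
      (Submodule.subset_span ⟨n, rfl⟩), hc⟩

theorem Submodule.dense_of_forall_exists_norm_sub_le {P : Submodule 𝕜 E} {q : ℝ}
    (hq₀ : 0 ≤ q) (hq₁ : q < 1) (h : ∀ f : E, ∀ η > 0, ∃ w ∈ P, ‖f - w‖ ≤ q * ‖f‖ + η) :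
    Dense (P : Set E) := by
  intro f
  have hP : (P : Set E).Nonempty := ⟨0, P.zero_mem⟩
  set d := Metric.infDist f (P : Set E)
  -- `P` is invariant under translation by its elements, so `h` applied to `f - w` bounds `d`.
  have hd : ∀ w ∈ P, d ≤ q * dist f w := by
    intro w hw
    refine le_of_forall_pos_le_add fun η hη => ?_
    obtain ⟨w', hw', hfw'⟩ := h (f - w) η hη
    calc d ≤ dist f (w + w') := Metric.infDist_le_dist_of_mem (P.add_mem hw hw')
      _ = ‖f - w - w'‖ := by rw [dist_eq_norm, sub_sub]
      _ ≤ q * dist f w + η := by rwa [dist_eq_norm]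
  have hdq : d ≤ q * d := by
    refine le_of_forall_pos_le_add fun ε hε => ?_
    obtain ⟨w, hw, hfw⟩ := (Metric.infDist_lt_iff hP).1 (lt_add_of_pos_right d hε)
    nlinarith [hd w hw]
  rw [Metric.mem_closure_iff_infDist_zero hP]
  nlinarith [Metric.infDist_nonneg (x := f) (s := (P : Set E))]

variable (𝕜) in
def HasRieszBounds (u : ℕ → E) (K : ℝ) : Prop :=
  ∀ (F : Finset ℕ) (c : ℕ → 𝕜),
    (1 / K) * ∑ n ∈ F, ‖c n‖ ^ 2 ≤ ‖∑ n ∈ F, c n • u n‖ ^ 2 ∧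
      ‖∑ n ∈ F, c n • u n‖ ^ 2 ≤ K * ∑ n ∈ F, ‖c n‖ ^ 2

variable {u v : ℕ → E} {K δ : ℝ}

theorem hasRieszBounds_iff (hK : 0 < K) :
    HasRieszBounds 𝕜 u K ↔ ∀ (F : Finset ℕ) (c : ℕ → 𝕜),
      √(∑ n ∈ F, ‖c n‖ ^ 2) ≤ √K * ‖∑ n ∈ F, c n • u n‖ ∧
        ‖∑ n ∈ F, c n • u n‖ ≤ √K * √(∑ n ∈ F, ‖c n‖ ^ 2) := by
  refine forall₂_congr fun F c => and_congr ?_ ?_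
  · rw [show √K * ‖∑ n ∈ F, c n • u n‖ = √(K * ‖∑ n ∈ F, c n • u n‖ ^ 2) by
      rw [sqrt_mul hK.le, sqrt_sq (norm_nonneg _)], sqrt_le_sqrt_iff (by positivity), one_div,
      inv_mul_le_iff₀ hK]
  · rw [← sqrt_mul hK.le, le_sqrt (norm_nonneg _) (by positivity)]

theorem sum_smul_eq_add_sum_smul_sub (F : Finset ℕ) (c : ℕ → 𝕜) :
    ∑ n ∈ F, c n • v n = ∑ n ∈ F, c n • u n + ∑ n ∈ F, c n • (v n - u n) := by
  rw [← Finset.sum_add_distrib]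
  exact Finset.sum_congr rfl fun n _ => by rw [smul_sub, add_sub_cancel]

theorem HasRieszBounds.of_perturbation (hu : HasRieszBounds 𝕜 u K) (hK : 1 ≤ K)
    (hδ : δ * √K ≤ 1 / 2)
    (huv : ∀ (F : Finset ℕ) (c : ℕ → 𝕜),
      ‖∑ n ∈ F, c n • (v n - u n)‖ ≤ δ * √(∑ n ∈ F, ‖c n‖ ^ 2)) :
    HasRieszBounds 𝕜 v (4 * K) := by
  have hK₀ : 0 < K := by linarith
  have h4K : √(4 * K) = 2 * √K := by
    rw [sqrt_mul zero_le_four, show (4 : ℝ) = 2 ^ 2 by norm_num, sqrt_sq zero_le_two]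
  have h1K : 1 ≤ √K := one_le_sqrt.2 hK
  rw [hasRieszBounds_iff hK₀] at hu
  rw [hasRieszBounds_iff (by positivity), h4K]
  intro F c
  obtain ⟨hlow, hup⟩ := hu F c
  have hpert := huv F c
  have hv := sum_smul_eq_add_sum_smul_sub (u := u) (v := v) F c
  have htri₁ : ‖∑ n ∈ F, c n • v n‖ ≤ ‖∑ n ∈ F, c n • u n‖ + ‖∑ n ∈ F, c n • (v n - u n)‖ :=
    hv ▸ norm_add_le _ _
  have htri₂ : ‖∑ n ∈ F, c n • u n‖ ≤ ‖∑ n ∈ F, c n • v n‖ + ‖∑ n ∈ F, c n • (v n - u n)‖ := by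
    rw [hv]; exact norm_le_add_norm_add _ _
  have hs := sqrt_nonneg (∑ n ∈ F, ‖c n‖ ^ 2)
  constructor
  · nlinarith [mul_le_mul_of_nonneg_left htri₂ (sqrt_nonneg K),
      mul_le_mul_of_nonneg_left hpert (sqrt_nonneg K)]
  · nlinarith

theorem dense_span_of_perturbation (hdense : Dense (Submodule.span 𝕜 (Set.range u) : Set E))
    (hu : HasRieszBounds 𝕜 u K) (hK : 0 < K) (hδ : δ * √K ≤ 1 / 2)
    (huv : ∀ (F : Finset ℕ) (c : ℕ → 𝕜),
      ‖∑ n ∈ F, c n • (v n - u n)‖ ≤ δ * √(∑ n ∈ F, ‖c n‖ ^ 2)) :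
    Dense (Submodule.span 𝕜 (Set.range v) : Set E) := by
  refine Submodule.dense_of_forall_exists_norm_sub_le (q := 1 / 2) (by norm_num) (by norm_num)
    fun f η hη => ?_
  obtain ⟨F, c, hfc⟩ := dense_span_range_iff.1 hdense f (η / 2) (by positivity)
  refine ⟨∑ n ∈ F, c n • v n, Submodule.sum_mem _ fun n _ => Submodule.smul_mem _ _
    (Submodule.subset_span ⟨n, rfl⟩), ?_⟩
  have hlow := ((hasRieszBounds_iff hK).1 hu F c).1
  have hpert := huv F c
  have hsplit : f - ∑ n ∈ F, c n • v n
      = (f - ∑ n ∈ F, c n • u n) - ∑ n ∈ F, c n • (v n - u n) := by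
    rw [sum_smul_eq_add_sum_smul_sub (u := u) F c, sub_add_eq_sub_sub]
  have htri : ‖f - ∑ n ∈ F, c n • v n‖
      ≤ ‖f - ∑ n ∈ F, c n • u n‖ + ‖∑ n ∈ F, c n • (v n - u n)‖ :=
    hsplit ▸ norm_sub_le _ _
  have hfu : ‖∑ n ∈ F, c n • u n‖ ≤ ‖f‖ + η / 2 := by
    have := norm_sub_norm_le (∑ n ∈ F, c n • u n) f
    rw [norm_sub_rev] at this
    linarith
  have hs := sqrt_nonneg (∑ n ∈ F, ‖c n‖ ^ 2)
  rcases le_or_gt 0 δ with hδ₀ | hδ₀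
  · have := mul_le_mul_of_nonneg_right hδ (by positivity : 0 ≤ ‖f‖ + η / 2)
    nlinarith [mul_le_mul_of_nonneg_left hlow hδ₀, mul_le_mul_of_nonneg_left hfu
      (mul_nonneg hδ₀ (sqrt_nonneg K))]
  · nlinarith [norm_nonneg f, mul_nonneg (neg_nonneg.2 hδ₀.le) hs]

end RieszBasis

theorem integral_norm_sq_eq_norm_sq {α 𝕜 E : Type*} [MeasurableSpace α] {μ : Measure α}
    [RCLike 𝕜] [NormedAddCommGroup E] [InnerProductSpace 𝕜 E] {f : α → E} (g : Lp E 2 μ)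
    (hfg : f =ᵐ[μ] g) : ∫ x, ‖f x‖ ^ 2 ∂μ = ‖g‖ ^ 2 := by
  rw [← inner_self_eq_norm_sq (𝕜 := 𝕜), L2.inner_def, ← integral_re (L2.integrable_inner g g)]
  refine integral_congr_ae (hfg.mono fun x hx => ?_)
  dsimp only
  rw [hx, inner_self_eq_norm_sq]

theorem norm_expFun (l x : ℝ) : ‖expFun l x‖ = 1 := by
  rw [expFun, show 2 * π * Complex.I * l * x = ((2 * π * l * x : ℝ) : ℂ) * Complex.I by
    push_cast; ring]
  exact Complex.norm_exp_ofReal_mul_I _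

@[fun_prop]
theorem continuous_expFun (l : ℝ) : Continuous (expFun l) := by
  unfold expFun; fun_prop

theorem sum_range_pow_succ_div_factorial_le {x : ℝ} (hx : 0 ≤ x) (m : ℕ) :
    ∑ k ∈ Finset.range m, x ^ (k + 1) / (k + 1).factorial ≤ exp x - 1 := by
  have := Real.sum_le_exp_of_nonneg hx (m + 1)
  rw [Finset.sum_range_succ'] at this
  simp only [pow_zero, Nat.factorial_zero, Nat.cast_one, div_one] at this
  linarith

theorem norm_two_pi_I_mul_pow_div_factorial (x : ℝ) (k : ℕ) :
    ‖(2 * π * Complex.I * x) ^ k / k.factorial‖ = (2 * π * |x|) ^ k / k.factorial := by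
  simp [abs_of_pos pi_pos]

theorem exists_pos_exp_mul_sub_one_mul_le (a b : ℝ) {ε : ℝ} (hε : 0 < ε) :
    ∃ t > 0, (exp (a * t) - 1) * b ≤ ε := by
  have hcont : Continuous fun t => (exp (a * t) - 1) * b := by fun_prop
  have hsmall : ∀ᶠ t in nhds 0, (exp (a * t) - 1) * b < ε :=
    hcont.continuousAt.eventually_lt continuousAt_const (by simpa using hε)
  obtain ⟨t, ht, htpos⟩ :=
    ((eventually_nhdsWithin_of_eventually_nhds hsmall).and
      (self_mem_nhdsWithin (s := Set.Ioi (0 : ℝ)))).exists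
  exact ⟨t, htpos, ht.le⟩

/-- The `k`-th term of `∑ c n (e_{γ n} - e_{λ n})` expanded in powers of `γ n - λ n`: a polynomial
in `x` times a combination of the `e_{λ n}`, so that the Riesz bound of `λ` applies to it. -/
noncomputable def taylorTerm (F : Finset ℕ) (c : ℕ → ℂ) (lam gam : ℕ → ℝ) (k : ℕ) (x : ℝ) : ℂ :=
  (2 * π * Complex.I * x) ^ k / k.factorial *
    ∑ n ∈ F, c n * ((gam n - lam n : ℝ) : ℂ) ^ k * expFun (lam n) x

@[fun_prop]
theorem continuous_taylorTerm (F : Finset ℕ) (c : ℕ → ℂ) (lam gam : ℕ → ℝ) (k : ℕ) :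
    Continuous (taylorTerm F c lam gam k) := by
  unfold taylorTerm; fun_prop

open Complex in
theorem hasSum_taylorTerm (F : Finset ℕ) (c : ℕ → ℂ) (lam gam : ℕ → ℝ) (x : ℝ) :
    HasSum (fun k => taylorTerm F c lam gam (k + 1) x)
      (∑ n ∈ F, c n * (expFun (gam n) x - expFun (lam n) x)) := by
  have hexp (n : ℕ) : HasSum
      (fun k => (2 * π * I * ((gam n - lam n : ℝ) : ℂ) * x) ^ (k + 1) / ↑(k + 1).factorial)
      (Complex.exp (2 * π * I * ((gam n - lam n : ℝ) : ℂ) * x) - 1) := by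
    have := (hasSum_nat_add_iff' 1).2
      (NormedSpace.expSeries_div_hasSum_exp (2 * π * I * ((gam n - lam n : ℝ) : ℂ) * x))
    simpa [← Complex.exp_eq_exp_ℂ] using this
  have hsplit (n : ℕ) : expFun (gam n) x
      = expFun (lam n) x * Complex.exp (2 * π * I * ((gam n - lam n : ℝ) : ℂ) * x) := by
    rw [expFun, expFun, ← Complex.exp_add]
    push_cast
    ring_nf
  have h := hasSum_sum (s := F) fun n _ => (hexp n).mul_left (c n * expFun (lam n) x)
  rw [Finset.sum_congr rfl fun n _ => by rw [hsplit n, ← mul_sub_one, ← mul_assoc]]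
  refine h.congr_fun fun k => ?_
  rw [taylorTerm, Finset.mul_sum]
  exact Finset.sum_congr rfl fun n _ => by ring

section ExpLp

variable (μ : Measure ℝ) [IsFiniteMeasure μ]

theorem memLp_expFun (p : ENNReal) (l : ℝ) : MemLp (expFun l) p μ :=
  MemLp.of_bound (continuous_expFun l).aestronglyMeasurable 1
    (ae_of_all _ fun x => (norm_expFun l x).le)

noncomputable def expLp (l : ℝ) : Lp ℂ 2 μ := (memLp_expFun μ 2 l).toLp (expFun l)

variable {μ}

theorem coeFn_sum_smul_expLp (l : ℕ → ℝ) (F : Finset ℕ) (c : ℕ → ℂ) :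
    ⇑(∑ n ∈ F, c n • expLp μ (l n)) =ᵐ[μ] fun x => ∑ n ∈ F, c n * expFun (l n) x := by
  induction F using Finset.induction_on with
  | empty => rw [Finset.sum_empty]; exact Lp.coeFn_zero ℂ 2 μ
  | insert m F hm ih =>
    simp only [Finset.sum_insert hm]
    filter_upwards [Lp.coeFn_add (c m • expLp μ (l m)) (∑ n ∈ F, c n • expLp μ (l n)),
      Lp.coeFn_smul (c m) (expLp μ (l m)), (memLp_expFun μ 2 (l m)).coeFn_toLp, ih]
      with x hadd hsmul hexp hF
    rw [hadd, Pi.add_apply, hsmul, Pi.smul_apply, expLp, hexp, hF, smul_eq_mul]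

theorem integral_norm_sum_mul_expFun_sq (l : ℕ → ℝ) (F : Finset ℕ) (c : ℕ → ℂ) :
    ∫ x, ‖∑ n ∈ F, c n * expFun (l n) x‖ ^ 2 ∂μ = ‖∑ n ∈ F, c n • expLp μ (l n)‖ ^ 2 :=
  integral_norm_sq_eq_norm_sq (𝕜 := ℂ) _ (coeFn_sum_smul_expLp l F c).symm

theorem integral_norm_sub_sum_mul_expFun_sq {f : ℝ → ℂ} (hf : MemLp f 2 μ) (l : ℕ → ℝ)
    (F : Finset ℕ) (c : ℕ → ℂ) :
    ∫ x, ‖f x - ∑ n ∈ F, c n * expFun (l n) x‖ ^ 2 ∂μ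
      = ‖hf.toLp f - ∑ n ∈ F, c n • expLp μ (l n)‖ ^ 2 := by
  refine integral_norm_sq_eq_norm_sq (𝕜 := ℂ) _ ?_
  filter_upwards [Lp.coeFn_sub (hf.toLp f) (∑ n ∈ F, c n • expLp μ (l n)), hf.coeFn_toLp,
    coeFn_sum_smul_expLp l F c] with x hsub hf hsum
  rw [hsub, Pi.sub_apply, hf, hsum]

theorem norm_sum_smul_expLp_pow_le {K δ₀ : ℝ} {lam gam : ℕ → ℝ}
    (hgam : ∀ n, |gam n - lam n| ≤ δ₀)
    (hbessel : ∀ (F : Finset ℕ) (c : ℕ → ℂ),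
      ‖∑ n ∈ F, c n • expLp μ (lam n)‖ ≤ √K * √(∑ n ∈ F, ‖c n‖ ^ 2))
    (F : Finset ℕ) (c : ℕ → ℂ) (k : ℕ) :
    ‖∑ n ∈ F, (c n * ((gam n - lam n : ℝ) : ℂ) ^ k) • expLp μ (lam n)‖
      ≤ √K * (δ₀ ^ k * √(∑ n ∈ F, ‖c n‖ ^ 2)) := by
  have hδ₀ : 0 ≤ δ₀ := (abs_nonneg _).trans (hgam 0)
  refine (hbessel F _).trans (mul_le_mul_of_nonneg_left ?_ (sqrt_nonneg K))
  rw [← sqrt_sq (pow_nonneg hδ₀ k), ← sqrt_mul (by positivity)]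
  refine sqrt_le_sqrt ?_
  rw [Finset.mul_sum]
  refine Finset.sum_le_sum fun n _ => ?_
  rw [norm_mul, norm_pow, Complex.norm_real, norm_eq_abs, mul_pow, mul_comm]
  gcongr
  exact hgam n

theorem eLpNorm_taylorTerm_le {R K δ₀ : ℝ} {lam gam : ℕ → ℝ} (hR₀ : 0 ≤ R)
    (hR : ∀ᵐ x ∂μ, |x| ≤ R) (hgam : ∀ n, |gam n - lam n| ≤ δ₀)
    (hbessel : ∀ (F : Finset ℕ) (c : ℕ → ℂ),
      ‖∑ n ∈ F, c n • expLp μ (lam n)‖ ≤ √K * √(∑ n ∈ F, ‖c n‖ ^ 2))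
    (F : Finset ℕ) (c : ℕ → ℂ) (k : ℕ) :
    eLpNorm (taylorTerm F c lam gam k) 2 μ ≤ ENNReal.ofReal
      ((2 * π * R * δ₀) ^ k / k.factorial * (√K * √(∑ n ∈ F, ‖c n‖ ^ 2))) := by
  set G := ∑ n ∈ F, (c n * ((gam n - lam n : ℝ) : ℂ) ^ k) • expLp μ (lam n)
  have hpt : ∀ᵐ x ∂μ, ‖taylorTerm F c lam gam k x‖ ≤ (2 * π * R) ^ k / k.factorial * ‖G x‖ := by
    filter_upwards [hR, coeFn_sum_smul_expLp lam F _] with x hx hGx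
    rw [taylorTerm, hGx, norm_mul, norm_two_pi_I_mul_pow_div_factorial]
    gcongr
  calc eLpNorm (taylorTerm F c lam gam k) 2 μ
      ≤ ENNReal.ofReal ((2 * π * R) ^ k / k.factorial) * ENNReal.ofReal ‖G‖ := by
        rw [Lp.norm_def, ENNReal.ofReal_toReal (Lp.eLpNorm_ne_top G)]
        exact eLpNorm_le_mul_eLpNorm_of_ae_le_mul hpt 2
    _ ≤ ENNReal.ofReal ((2 * π * R) ^ k / k.factorial
          * (√K * (δ₀ ^ k * √(∑ n ∈ F, ‖c n‖ ^ 2)))) := by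
        rw [← ENNReal.ofReal_mul (by positivity)]
        gcongr
        exact norm_sum_smul_expLp_pow_le hgam hbessel F c k
    _ = _ := by rw [mul_pow]; ring_nf

theorem coeFn_sum_smul_expLp_sub (l l' : ℕ → ℝ) (F : Finset ℕ) (c : ℕ → ℂ) :
    ⇑(∑ n ∈ F, c n • (expLp μ (l' n) - expLp μ (l n)))
      =ᵐ[μ] fun x => ∑ n ∈ F, c n * (expFun (l' n) x - expFun (l n) x) := by
  simp only [smul_sub, Finset.sum_sub_distrib, mul_sub]
  filter_upwards [Lp.coeFn_sub (∑ n ∈ F, c n • expLp μ (l' n)) (∑ n ∈ F, c n • expLp μ (l n)),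
    coeFn_sum_smul_expLp l' F c, coeFn_sum_smul_expLp l F c] with x hsub hl' hl
  rw [hsub, Pi.sub_apply, hl', hl]

theorem norm_sum_smul_expLp_sub_le {R K δ₀ : ℝ} {lam gam : ℕ → ℝ} (hR₀ : 0 ≤ R)
    (hR : ∀ᵐ x ∂μ, |x| ≤ R) (hgam : ∀ n, |gam n - lam n| ≤ δ₀)
    (hbessel : ∀ (F : Finset ℕ) (c : ℕ → ℂ),
      ‖∑ n ∈ F, c n • expLp μ (lam n)‖ ≤ √K * √(∑ n ∈ F, ‖c n‖ ^ 2))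
    (F : Finset ℕ) (c : ℕ → ℂ) :
    ‖∑ n ∈ F, c n • (expLp μ (gam n) - expLp μ (lam n))‖
      ≤ (exp (2 * π * R * δ₀) - 1) * √K * √(∑ n ∈ F, ‖c n‖ ^ 2) := by
  have hδ₀ : 0 ≤ δ₀ := (abs_nonneg _).trans (hgam 0)
  set s := √(∑ n ∈ F, ‖c n‖ ^ 2)
  have hpartial (m : ℕ) :
      eLpNorm (∑ k ∈ Finset.range m, taylorTerm F c lam gam (k + 1)) 2 μ
        ≤ ENNReal.ofReal ((exp (2 * π * R * δ₀) - 1) * (√K * s)) :=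
    calc eLpNorm (∑ k ∈ Finset.range m, taylorTerm F c lam gam (k + 1)) 2 μ
        ≤ ∑ k ∈ Finset.range m, eLpNorm (taylorTerm F c lam gam (k + 1)) 2 μ :=
          eLpNorm_sum_le (fun k _ => (continuous_taylorTerm ..).aestronglyMeasurable) one_le_two
      _ ≤ ∑ k ∈ Finset.range m, ENNReal.ofReal
            ((2 * π * R * δ₀) ^ (k + 1) / (k + 1).factorial * (√K * s)) :=
          Finset.sum_le_sum fun k _ => eLpNorm_taylorTerm_le hR₀ hR hgam hbessel F c (k + 1)
      _ = ENNReal.ofReal (∑ k ∈ Finset.range m,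
            (2 * π * R * δ₀) ^ (k + 1) / (k + 1).factorial * (√K * s)) :=
          (ENNReal.ofReal_sum_of_nonneg fun k _ => by positivity).symm
      _ ≤ ENNReal.ofReal ((exp (2 * π * R * δ₀) - 1) * (√K * s)) := by
          rw [← Finset.sum_mul]
          gcongr
          exact sum_range_pow_succ_div_factorial_le (by positivity) m
  -- Fatou's lemma for `eLpNorm` passes the bound on the partial sums to their pointwise limit.
  have hlim := Lp.eLpNorm_lim_le_liminf_eLpNorm (p := 2) (μ := μ)
    (f := fun m => ∑ k ∈ Finset.range m, taylorTerm F c lam gam (k + 1))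
    (fun m => Finset.aestronglyMeasurable_sum _ fun k _ =>
      (continuous_taylorTerm ..).aestronglyMeasurable) _
    (ae_of_all _ fun x => by
      simpa only [Finset.sum_apply] using (hasSum_taylorTerm F c lam gam x).tendsto_sum_nat)
  rw [Lp.norm_def, eLpNorm_congr_ae (coeFn_sum_smul_expLp_sub lam gam F c), mul_assoc]
  exact ENNReal.toReal_le_of_le_ofReal
    (mul_nonneg (sub_nonneg.2 (one_le_exp (by positivity))) (by positivity))
    (hlim.trans (Filter.liminf_le_of_frequently_le' (Filter.Frequently.of_forall hpartial)))

end ExpLp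

theorem isRieszBasisExpSeq_iff (S : Set ℝ) [IsFiniteMeasure (volume.restrict S)]
    (lam : ℕ → ℝ) :
    IsRieszBasisExpSeq S lam ↔
      Dense (Submodule.span ℂ (Set.range fun n => expLp (volume.restrict S) (lam n)) :
          Set (Lp ℂ 2 (volume.restrict S))) ∧
        ∃ K ≥ (1 : ℝ), HasRieszBounds ℂ (fun n => expLp (volume.restrict S) (lam n)) K := by
  simp only [IsRieszBasisExpSeq, HasRieszBounds, integral_norm_sum_mul_expFun_sq,
    dense_span_range_iff]
  refine and_congr_left' ⟨fun h g ε hε => ?_, fun h f hf ε hε => ?_⟩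
  · obtain ⟨F, c, hFc⟩ := h g (Lp.memLp g) (ε ^ 2) (by positivity)
    rw [integral_norm_sub_sum_mul_expFun_sq (Lp.memLp g), Lp.toLp_coeFn] at hFc
    exact ⟨F, c, (sq_lt_sq₀ (norm_nonneg _) hε.le).1 hFc⟩
  · obtain ⟨F, c, hFc⟩ := h (hf.toLp f) (√ε) (sqrt_pos.2 hε)
    refine ⟨F, c, ?_⟩
    rw [integral_norm_sub_sum_mul_expFun_sq hf]
    exact (lt_sqrt (norm_nonneg _)).1 hFc

theorem Bornology.IsBounded.exists_ae_restrict_abs_le {S : Set ℝ} (hS : Bornology.IsBounded S) :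
    ∃ R ≥ 0, ∀ᵐ x ∂volume.restrict S, |x| ≤ R := by
  obtain ⟨R, hR₀, hSR⟩ := hS.subset_closedBall_lt 0 0
  refine ⟨R, hR₀.le, ?_⟩
  filter_upwards [ae_restrict_of_ae_restrict_of_subset hSR
    (ae_restrict_mem (μ := volume) measurableSet_closedBall)] with x hx
  rwa [mem_closedBall_zero_iff, norm_eq_abs] at hx

theorem paley_wiener_perturbation_general (S : Set ℝ)
    (hSb : Bornology.IsBounded S)
    (lam : ℕ → ℝ) (h : IsRieszBasisExpSeq S lam) :
    ∃ μ > (0 : ℝ), ∀ gam : ℕ → ℝ, (∀ n, |lam n - gam n| < μ) →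
      IsRieszBasisExpSeq S gam := by
  have : IsFiniteMeasure (volume.restrict S) :=
    isFiniteMeasure_restrict.2 hSb.measure_lt_top.ne
  obtain ⟨hdense, K, hK, hu⟩ := (isRieszBasisExpSeq_iff S lam).1 h
  obtain ⟨R, hR₀, hR⟩ := hSb.exists_ae_restrict_abs_le
  obtain ⟨μ, hμ, hμK⟩ :=
    exists_pos_exp_mul_sub_one_mul_le (2 * π * R) (√K * √K) (by norm_num : (0 : ℝ) < 1 / 2)
  refine ⟨μ, hμ, fun gam hgam => (isRieszBasisExpSeq_iff S gam).2 ?_⟩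
  have hδ : (exp (2 * π * R * μ) - 1) * √K * √K ≤ 1 / 2 := by rwa [mul_assoc _ √K]
  have huv := norm_sum_smul_expLp_sub_le hR₀ hR
    (fun n => (abs_sub_comm (gam n) (lam n)).trans_le (hgam n).le)
    (fun F c => ((hasRieszBounds_iff (by linarith)).1 hu F c).2)
  exact ⟨dense_span_of_perturbation hdense hu (by linarith) hδ huv,
    4 * K, by linarith, hu.of_perturbation hK hδ huv⟩

/-- Paley–Wiener perturbation theorem: a small enough perturbation of the
frequencies of a Riesz basis of exponentials is again a Riesz basis. -/
theorem paley_wiener_perturbation (S : Set ℝ) (hSm : MeasurableSet S)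
    (hSb : Bornology.IsBounded S) (hS : 0 < volume S)
    (lam : ℕ → ℝ) (h : IsRieszBasisExpSeq S lam) :
    ∃ μ > (0 : ℝ), ∀ gam : ℕ → ℝ, (∀ n, |lam n - gam n| < μ) →
      IsRieszBasisExpSeq S gam :=
  paley_wiener_perturbation_general S hSb lam h
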